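/- Closedness of bad colorings: fix d, k, q, t, n. In the complete metric space of measurable k-colorings of ℝ^d (with the metric d(f,g) = Σ 2^{-m} λ(D_m(f,g))/(2m)^d), the set B_n of colorings f for which there exists a nontrivial axis-aligned cube C ⊆ [-n,n]^d admitting a fair q-splitting using at most t axis-aligned hyperplane cuts with granularity at least 1/n is a closed set. -/

import Mathlib

open MeasureTheory

/-- The distance between two measurable `k`-colorings of `ℝ^d`:
`d(f,g) = ∑_{m≥1} 2^{-m} λ({x ∈ [-m,m]^d : f x ≠ g x}) / (2m)^d`. -/
noncomputable def colDist (d k : ℕ) (f g : (Fin d → ℝ) → Fin k) : ℝ :=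
  ∑' m : ℕ,
    (volume {x : Fin d → ℝ | (∀ i, |x i| ≤ (m : ℝ) + 1) ∧ f x ≠ g x}).toReal /
      ((2 * ((m : ℝ) + 1)) ^ d * 2 ^ (m + 1))

/-- `f` is a "bad" coloring: some nontrivial axis-aligned cube inside `[-n,n]^d`
admits a fair `q`-splitting using at most `t` axis-aligned hyperplane cuts with
granularity at least `1/n`. The splitting labels the pieces of the cut arrangement
with labels in `Fin q`, and each labeled part captures exactly `1/q` of the volume of
each color class of the cube. -/
def IsBad (d k q t n : ℕ) (f : (Fin d → ℝ) → Fin k) : Prop :=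
  ∃ (α : ℝ) (a : Fin d → ℝ), 0 < α ∧
    (∀ i, -(n : ℝ) ≤ a i ∧ a i + α ≤ n) ∧
    ∃ t' : ℕ, t' ≤ t ∧
      ∃ (cut : Fin t' → Fin d × ℝ) (part : (Fin d → ℝ) → Fin q),
        (∀ s, a (cut s).1 + 1 / n ≤ (cut s).2 ∧ (cut s).2 + 1 / n ≤ a (cut s).1 + α) ∧
        (∀ s s', s ≠ s' → (cut s).1 = (cut s').1 → 1 / (n : ℝ) ≤ |(cut s).2 - (cut s').2|) ∧
        Measurable part ∧
        (∀ x y : Fin d → ℝ,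
          (∀ s, x (cut s).1 ≤ (cut s).2 ↔ y (cut s).1 ≤ (cut s).2) → part x = part y) ∧
        ∀ (j : Fin k) (l : Fin q),
          (q : ENNReal) *
              volume ({x : Fin d → ℝ | ∀ i, a i ≤ x i ∧ x i ≤ a i + α} ∩
                f ⁻¹' {j} ∩ part ⁻¹' {l}) =
            volume ({x : Fin d → ℝ | ∀ i, a i ≤ x i ∧ x i ≤ a i + α} ∩ f ⁻¹' {j})

section Helpers
open Filter Set

lemma ultraConst {β : Type*} [Finite β] (U : Ultrafilter ℕ) (g : ℕ → β) :
    ∃ b, ∀ᶠ m in (U : Filter ℕ), g m = b := by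
  by_contra h
  push_neg at h
  have h2 : ∀ b, {m | g m ≠ b} ∈ (U : Filter ℕ) := by
    intro b
    have := h b
    rw [Filter.Eventually] at this
    have := (this : {m | g m ≠ b} ∈ (U : Filter ℕ))
    simpa [Set.compl_setOf] using this
  have h3 : (⋂ b, {m | g m ≠ b}) ∈ (U : Filter ℕ) := Filter.iInter_mem.2 h2
  have h4 : (⋂ b, {m : ℕ | g m ≠ b}) = (∅ : Set ℕ) := by
    ext m; simp
  rw [h4] at h3
  exact (Filter.empty_notMem _) h3

/-- big cube -/
def KK (d n : ℕ) : Set (Fin d → ℝ) := {x | ∀ i, |x i| ≤ (n : ℝ)}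

lemma KK_eq_pi (d n : ℕ) : KK d n = Set.pi Set.univ (fun _ : Fin d => Set.Icc (-(n:ℝ)) n) := by
  ext x
  simp only [KK, Set.mem_setOf_eq, Set.mem_pi, Set.mem_univ, true_implies, Set.mem_Icc]
  exact forall_congr' fun i => abs_le

lemma KK_vol_ne_top (d n : ℕ) : volume (KK d n) ≠ ⊤ := by
  rw [KK_eq_pi, volume_pi_pi]
  simp [Real.volume_Icc]

lemma slab_vol (d n : ℕ) (hd : 1 ≤ d) (i0 : Fin d) (u v : ℝ) :
    volume (KK d n ∩ {x : Fin d → ℝ | x i0 ∈ Set.Icc u v}) ≤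
      ENNReal.ofReal ((2 * n) ^ (d - 1)) * ENNReal.ofReal (|v - u|) := by
  classical
  set F : Fin d → Set ℝ := fun i => if i = i0 then Set.Icc u v ∩ Set.Icc (-(n:ℝ)) n
    else Set.Icc (-(n:ℝ)) n with hF
  have hset : KK d n ∩ {x : Fin d → ℝ | x i0 ∈ Set.Icc u v} = Set.pi Set.univ F := by
    ext x
    simp only [KK, Set.mem_inter_iff, Set.mem_setOf_eq, Set.mem_pi, Set.mem_univ, true_implies, hF]
    constructor
    · rintro ⟨h1, h2⟩ i
      by_cases hi : i = i0
      · subst hi; simp only [if_pos rfl]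
        exact ⟨h2, Set.mem_Icc.2 (abs_le.1 (h1 _))⟩
      · simp only [if_neg hi]
        exact Set.mem_Icc.2 (abs_le.1 (h1 _))
    · intro h
      refine ⟨fun i => ?_, ?_⟩
      · have := h i
        by_cases hi : i = i0
        · subst hi; simp only [if_pos rfl] at this
          exact abs_le.2 (Set.mem_Icc.1 this.2)
        · simp only [if_neg hi] at this
          exact abs_le.2 (Set.mem_Icc.1 this)
      · have := h i0
        simp only [if_pos rfl] at this
        exact this.1
  rw [hset, volume_pi_pi]
  rw [← Finset.mul_prod_erase Finset.univ _ (Finset.mem_univ i0)]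
  have h1 : volume (F i0) ≤ ENNReal.ofReal (|v - u|) := by
    simp only [hF, if_pos rfl]
    refine le_trans (measure_mono Set.inter_subset_left) ?_
    rw [Real.volume_Icc]
    exact ENNReal.ofReal_le_ofReal (le_abs_self _)
  have h2 : ∏ i ∈ Finset.univ.erase i0, volume (F i) = ENNReal.ofReal ((2 * n) ^ (d - 1)) := by
    have : ∀ i ∈ Finset.univ.erase i0, volume (F i) = ENNReal.ofReal (2 * n) := by
      intro i hi
      have : i ≠ i0 := Finset.ne_of_mem_erase hi
      simp only [hF, if_neg this, Real.volume_Icc]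
      ring_nf
    rw [Finset.prod_congr rfl this, Finset.prod_const, Finset.card_erase_of_mem (Finset.mem_univ _)]
    rw [Finset.card_univ, Fintype.card_fin, ← ENNReal.ofReal_pow (by positivity)]
  rw [mul_comm]
  exact mul_le_mul' (le_of_eq h2) h1


/-- piece of the cube cut by hyperplanes, with sign pattern σ -/
def Bx {d T : ℕ} (e : Fin T → Fin d) (al : ℝ) (a : Fin d → ℝ) (c : Fin T → ℝ)
    (σ : Fin T → Bool) : Set (Fin d → ℝ) :=
  {x | (∀ i, a i ≤ x i ∧ x i ≤ a i + al) ∧ ∀ s, decide (x (e s) ≤ c s) = σ s}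


lemma decide_set_measurable {d : ℕ} (i : Fin d) (c : ℝ) (b : Bool) :
    MeasurableSet {x : Fin d → ℝ | decide (x i ≤ c) = b} := by
  cases b
  · simp only [decide_eq_false_iff_not]
    exact (measurableSet_le (measurable_pi_apply i) measurable_const).compl
  · simp only [decide_eq_true_eq]
    exact measurableSet_le (measurable_pi_apply i) measurable_const

lemma Bx_measurable {d T : ℕ} (e : Fin T → Fin d) (al : ℝ) (a : Fin d → ℝ) (c : Fin T → ℝ)
    (σ : Fin T → Bool) : MeasurableSet (Bx e al a c σ) := by
  have h1 : Bx e al a c σ = (⋂ i, {x : Fin d → ℝ | a i ≤ x i ∧ x i ≤ a i + al}) ∩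
      ⋂ s, {x : Fin d → ℝ | decide (x (e s) ≤ c s) = σ s} := by
    ext x; simp [Bx]
  rw [h1]
  refine MeasurableSet.inter (MeasurableSet.iInter fun i => ?_)
    (MeasurableSet.iInter fun s => decide_set_measurable _ _ _)
  exact (measurableSet_le measurable_const (measurable_pi_apply i)).inter
    (measurableSet_le (measurable_pi_apply i) measurable_const)

lemma Bx_subset_KK {d T n : ℕ} (e : Fin T → Fin d) {al : ℝ} {a : Fin d → ℝ} (c : Fin T → ℝ)
    (σ : Fin T → Bool) (hK : ∀ i, -(n : ℝ) ≤ a i ∧ a i + al ≤ n) :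
    Bx e al a c σ ⊆ KK d n := by
  rintro x ⟨h1, _⟩ i
  exact abs_le.2 ⟨le_trans (hK i).1 (h1 i).1, le_trans (h1 i).2 (hK i).2⟩

lemma Bx_disjoint {d T : ℕ} (e : Fin T → Fin d) (al : ℝ) (a : Fin d → ℝ) (c : Fin T → ℝ)
    {σ σ' : Fin T → Bool} (h : σ ≠ σ') : Bx e al a c σ ∩ Bx e al a c σ' = ∅ := by
  ext x
  simp only [Set.mem_inter_iff, Set.mem_empty_iff_false, iff_false]
  rintro ⟨⟨_, h1⟩, ⟨_, h2⟩⟩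
  exact h (funext fun s => (h1 s).symm.trans (h2 s))

/-- the difference of two boxes (within the big cube) is covered by slabs -/
lemma Bx_diff_subset {d T : ℕ} (n : ℕ) (e : Fin T → Fin d) (al al' : ℝ) (a a' : Fin d → ℝ)
    (c c' : Fin T → ℝ) (σ : Fin T → Bool) :
    (Bx e al a c σ ∩ KK d n) \ Bx e al' a' c' σ ⊆
      (⋃ i, KK d n ∩ {x | x i ∈ Set.Icc (min (a i) (a' i)) (max (a i) (a' i))}) ∪
      (⋃ i, KK d n ∩ {x | x i ∈ Set.Icc (min (a i + al) (a' i + al')) (max (a i + al) (a' i + al'))}) ∪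
      (⋃ s, KK d n ∩ {x | x (e s) ∈ Set.Icc (min (c s) (c' s)) (max (c s) (c' s))}) := by
  rintro x ⟨⟨⟨hb, hc⟩, hK⟩, hnot⟩
  simp only [Bx, Set.mem_setOf_eq, not_and_or, not_forall] at hnot
  rcases hnot with h | h
  · obtain ⟨i, hi⟩ := h
    rcases hi with hi | hi <;> rw [not_le] at hi
    · left; left
      exact Set.mem_iUnion.2 ⟨i, hK, Set.mem_Icc.2
        ⟨le_trans (min_le_left _ _) (hb i).1, le_trans (le_of_lt hi) (le_max_right _ _)⟩⟩
    · left; right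
      exact Set.mem_iUnion.2 ⟨i, hK, Set.mem_Icc.2
        ⟨le_trans (min_le_right _ _) (le_of_lt hi), le_trans (hb i).2 (le_max_left _ _)⟩⟩
  · obtain ⟨s, hs⟩ := h
    right
    refine Set.mem_iUnion.2 ⟨s, hK, Set.mem_Icc.2 ?_⟩
    have h1 := hc s
    by_cases hle : x (e s) ≤ c s
    · have hle' : ¬ x (e s) ≤ c' s := by
        intro hco; apply hs; rw [← h1]; simp [hle, hco]
      push_neg at hle'
      exact ⟨le_trans (min_le_right _ _) (le_of_lt hle'), le_trans hle (le_max_left _ _)⟩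
    · have hle' : x (e s) ≤ c' s := by
        by_contra hco; apply hs; rw [← h1]; simp [hle, hco]
      push_neg at hle
      exact ⟨le_trans (min_le_left _ _) (le_of_lt hle), le_trans hle' (le_max_right _ _)⟩

/-- volume bound on box difference -/
lemma Bx_diff_vol {d T : ℕ} (n : ℕ) (hd : 1 ≤ d) (e : Fin T → Fin d) (al al' : ℝ)
    (a a' : Fin d → ℝ) (c c' : Fin T → ℝ) (σ : Fin T → Bool) :
    (volume ((Bx e al a c σ ∩ KK d n) \ Bx e al' a' c' σ)).toReal ≤
      (2 * n) ^ (d - 1) *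
        ((∑ i, |a' i - a i|) + (∑ i, |(a' i + al') - (a i + al)|) + ∑ s, |c' s - c s|) := by
  have key : volume ((Bx e al a c σ ∩ KK d n) \ Bx e al' a' c' σ) ≤
      ENNReal.ofReal ((2 * n) ^ (d - 1) *
        ((∑ i, |a' i - a i|) + (∑ i, |(a' i + al') - (a i + al)|) + ∑ s, |c' s - c s|)) := by
    refine le_trans (measure_mono (Bx_diff_subset n e al al' a a' c c' σ)) ?_
    refine le_trans (measure_union_le _ _) ?_
    refine le_trans (add_le_add (measure_union_le _ _) le_rfl) ?_
    have b1 : ∀ i : Fin d, volume (KK d n ∩ {x | x i ∈ Set.Icc (min (a i) (a' i)) (max (a i) (a' i))})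
        ≤ ENNReal.ofReal ((2 * n) ^ (d - 1)) * ENNReal.ofReal (|a' i - a i|) := by
      intro i
      refine le_trans (slab_vol d n hd i _ _) ?_
      rw [max_sub_min_eq_abs, abs_abs]
    have b2 : ∀ i : Fin d, volume (KK d n ∩ {x | x i ∈
        Set.Icc (min (a i + al) (a' i + al')) (max (a i + al) (a' i + al'))})
        ≤ ENNReal.ofReal ((2 * n) ^ (d - 1)) * ENNReal.ofReal (|(a' i + al') - (a i + al)|) := by
      intro i
      refine le_trans (slab_vol d n hd i _ _) ?_
      rw [max_sub_min_eq_abs, abs_abs]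
    have b3 : ∀ s : Fin T, volume (KK d n ∩ {x | x (e s) ∈
        Set.Icc (min (c s) (c' s)) (max (c s) (c' s))})
        ≤ ENNReal.ofReal ((2 * n) ^ (d - 1)) * ENNReal.ofReal (|c' s - c s|) := by
      intro s
      refine le_trans (slab_vol d n hd (e s) _ _) ?_
      rw [max_sub_min_eq_abs, abs_abs]
    calc volume (⋃ i, KK d n ∩ {x | x i ∈ Set.Icc (min (a i) (a' i)) (max (a i) (a' i))}) +
          volume (⋃ i, KK d n ∩ {x | x i ∈
            Set.Icc (min (a i + al) (a' i + al')) (max (a i + al) (a' i + al'))}) +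
          volume (⋃ s, KK d n ∩ {x | x (e s) ∈ Set.Icc (min (c s) (c' s)) (max (c s) (c' s))})
        ≤ (∑ i, ENNReal.ofReal ((2 * n) ^ (d - 1)) * ENNReal.ofReal (|a' i - a i|)) +
          (∑ i, ENNReal.ofReal ((2 * n) ^ (d - 1)) * ENNReal.ofReal (|(a' i + al') - (a i + al)|)) +
          (∑ s, ENNReal.ofReal ((2 * n) ^ (d - 1)) * ENNReal.ofReal (|c' s - c s|)) := by
          refine add_le_add (add_le_add ?_ ?_) ?_
          · exact le_trans (measure_iUnion_fintype_le _ _) (Finset.sum_le_sum fun i _ => b1 i)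
          · exact le_trans (measure_iUnion_fintype_le _ _) (Finset.sum_le_sum fun i _ => b2 i)
          · exact le_trans (measure_iUnion_fintype_le _ _) (Finset.sum_le_sum fun s _ => b3 s)
      _ = ENNReal.ofReal ((2 * n) ^ (d - 1) *
            ((∑ i, |a' i - a i|) + (∑ i, |(a' i + al') - (a i + al)|) + ∑ s, |c' s - c s|)) := by
          rw [← Finset.mul_sum, ← Finset.mul_sum, ← Finset.mul_sum, ← mul_add, ← mul_add,
            ← ENNReal.ofReal_sum_of_nonneg (fun i _ => abs_nonneg _),
            ← ENNReal.ofReal_sum_of_nonneg (fun i _ => abs_nonneg _),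
            ← ENNReal.ofReal_sum_of_nonneg (fun s _ => abs_nonneg _),
            ← ENNReal.ofReal_add (Finset.sum_nonneg fun i _ => abs_nonneg _)
              (Finset.sum_nonneg fun i _ => abs_nonneg _),
            ← ENNReal.ofReal_add (add_nonneg (Finset.sum_nonneg fun i _ => abs_nonneg _)
              (Finset.sum_nonneg fun i _ => abs_nonneg _)) (Finset.sum_nonneg fun s _ => abs_nonneg _),
            ← ENNReal.ofReal_mul (by positivity)]
  refine ENNReal.toReal_le_of_le_ofReal ?_ key
  positivity

lemma vol_ne_top_of_subset_KK {d n : ℕ} {S : Set (Fin d → ℝ)} (h : S ⊆ KK d n) :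
    volume S ≠ ⊤ :=
  ne_top_of_le_ne_top (KK_vol_ne_top d n) (measure_mono h)

lemma vol_tri {d : ℕ} (X Y Z W : Set (Fin d → ℝ)) (hsub : X ⊆ Y ∪ Z ∪ W)
    (hY : volume Y ≠ ⊤) (hZ : volume Z ≠ ⊤) (hW : volume W ≠ ⊤) :
    (volume X).toReal ≤ (volume Y).toReal + (volume Z).toReal + (volume W).toReal := by
  have h1 : volume X ≤ volume Y + volume Z + volume W :=
    le_trans (measure_mono hsub)
      (le_trans (measure_union_le _ _) (add_le_add (measure_union_le _ _) le_rfl))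
  have h2 := ENNReal.toReal_mono
    (by exact ENNReal.add_ne_top.2 ⟨ENNReal.add_ne_top.2 ⟨hY, hZ⟩, hW⟩) h1
  rwa [ENNReal.toReal_add (ENNReal.add_ne_top.2 ⟨hY, hZ⟩) hW, ENNReal.toReal_add hY hZ] at h2

lemma key_tendsto {d k T n : ℕ} (hd : 1 ≤ d) (e : Fin T → Fin d)
    (U : Filter ℕ) [U.NeBot]
    (al : ℕ → ℝ) (a : ℕ → Fin d → ℝ) (c : ℕ → Fin T → ℝ)
    (al' : ℝ) (a' : Fin d → ℝ) (c' : Fin T → ℝ)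
    (g : ℕ → (Fin d → ℝ) → Fin k) (f : (Fin d → ℝ) → Fin k) (j : Fin k)
    (hboxm : ∀ᶠ m in U, ∀ i, -(n : ℝ) ≤ a m i ∧ a m i + al m ≤ n)
    (hbox : ∀ i, -(n : ℝ) ≤ a' i ∧ a' i + al' ≤ n)
    (hal : Tendsto al U (nhds al')) (ha : ∀ i, Tendsto (fun m => a m i) U (nhds (a' i)))
    (hc : ∀ s, Tendsto (fun m => c m s) U (nhds (c' s)))
    (hdiff : Tendsto (fun m => (volume (KK d n ∩ {x | g m x ≠ f x})).toReal) U (nhds 0))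
    (σ : Fin T → Bool) :
    Tendsto (fun m => (volume (Bx e (al m) (a m) (c m) σ ∩ (g m) ⁻¹' {j})).toReal) U
      (nhds ((volume (Bx e al' a' c' σ ∩ f ⁻¹' {j})).toReal)) := by
  classical
  set A' : Set (Fin d → ℝ) := Bx e al' a' c' σ ∩ f ⁻¹' {j} with hA'
  set r : ℝ := (volume A').toReal with hr
  have hBx'K : Bx e al' a' c' σ ⊆ KK d n := Bx_subset_KK e c' σ hbox
  -- the real-valued error terms
  set D1 : ℕ → ℝ := fun m => (2 * n) ^ (d - 1) *
      ((∑ i, |a' i - a m i|) + (∑ i, |(a' i + al') - (a m i + al m)|) + ∑ s, |c' s - c m s|)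
    with hD1
  set D2 : ℕ → ℝ := fun m => (2 * n) ^ (d - 1) *
      ((∑ i, |a m i - a' i|) + (∑ i, |(a m i + al m) - (a' i + al')|) + ∑ s, |c m s - c' s|)
    with hD2
  set ep : ℕ → ℝ := fun m => (volume (KK d n ∩ {x | g m x ≠ f x})).toReal with hep
  set rho : ℕ → ℝ := fun m => D1 m + D2 m + ep m with hrho
  have hD1lim : Tendsto D1 U (nhds 0) := by
    have h1 : ∀ i : Fin d, Tendsto (fun m => |a' i - a m i|) U (nhds 0) := by
      intro i
      have := ((ha i).const_sub (a' i)).abs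
      simpa using this
    have h2 : ∀ i : Fin d, Tendsto (fun m => |(a' i + al') - (a m i + al m)|) U (nhds 0) := by
      intro i
      have := (((ha i).add hal).const_sub (a' i + al')).abs
      simpa using this
    have h3 : ∀ s : Fin T, Tendsto (fun m => |c' s - c m s|) U (nhds 0) := by
      intro s
      have := ((hc s).const_sub (c' s)).abs
      simpa using this
    have hsum1 : Tendsto (fun m => ∑ i, |a' i - a m i|) U (nhds 0) := by
      have := tendsto_finset_sum Finset.univ (fun i _ => h1 i)
      simpa using this
    have hsum2 : Tendsto (fun m => ∑ i, |(a' i + al') - (a m i + al m)|) U (nhds 0) := by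
      have := tendsto_finset_sum Finset.univ (fun i _ => h2 i)
      simpa using this
    have hsum3 : Tendsto (fun m => ∑ s, |c' s - c m s|) U (nhds 0) := by
      have := tendsto_finset_sum Finset.univ (fun s _ => h3 s)
      simpa using this
    have := ((hsum1.add hsum2).add hsum3).const_mul ((2 * n : ℝ) ^ (d - 1))
    simpa [hD1] using this
  have hD2lim : Tendsto D2 U (nhds 0) := by
    have heq : D2 = D1 := by
      funext m
      simp only [hD1, hD2, abs_sub_comm]
    rw [heq]; exact hD1lim
  have hrholim : Tendsto rho U (nhds 0) := by
    have := (hD1lim.add hD2lim).add hdiff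
    simpa [hrho] using this
  have hZfin : ∀ m, volume (KK d n ∩ {x | g m x ≠ f x}) ≠ ⊤ :=
    fun m => vol_ne_top_of_subset_KK Set.inter_subset_left
  have hA'fin : volume A' ≠ ⊤ :=
    vol_ne_top_of_subset_KK (Set.Subset.trans Set.inter_subset_left hBx'K)
  -- eventual two-sided bounds
  have hev : ∀ᶠ m in U,
      (volume (Bx e (al m) (a m) (c m) σ ∩ (g m) ⁻¹' {j})).toReal ≤ r + rho m ∧
      r - rho m ≤ (volume (Bx e (al m) (a m) (c m) σ ∩ (g m) ⁻¹' {j})).toReal := by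
    filter_upwards [hboxm] with m hm
    set Bm := Bx e (al m) (a m) (c m) σ with hBm
    have hBmK : Bm ⊆ KK d n := Bx_subset_KK e (c m) σ hm
    set Am : Set (Fin d → ℝ) := Bm ∩ (g m) ⁻¹' {j} with hAm
    have hAmfin : volume Am ≠ ⊤ :=
      vol_ne_top_of_subset_KK (Set.Subset.trans Set.inter_subset_left hBmK)
    set Y1 : Set (Fin d → ℝ) := (Bm ∩ KK d n) \ Bx e al' a' c' σ with hY1
    set Y2 : Set (Fin d → ℝ) := (Bx e al' a' c' σ ∩ KK d n) \ Bm with hY2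
    set Z : Set (Fin d → ℝ) := KK d n ∩ {x | g m x ≠ f x} with hZ
    have hY1fin : volume Y1 ≠ ⊤ :=
      vol_ne_top_of_subset_KK (fun x hx => hx.1.2)
    have hY2fin : volume Y2 ≠ ⊤ :=
      vol_ne_top_of_subset_KK (fun x hx => hx.1.2)
    have hY1le : (volume Y1).toReal ≤ D1 m := Bx_diff_vol n hd e (al m) al' (a m) a' (c m) c' σ
    have hY2le : (volume Y2).toReal ≤ D2 m := Bx_diff_vol n hd e al' (al m) a' (a m) c' (c m) σ
    have hZle : (volume Z).toReal = ep m := rfl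
    constructor
    · have hsub : Am ⊆ A' ∪ Y1 ∪ Z := by
        rintro x ⟨hxB, hxg⟩
        simp only [Set.mem_preimage, Set.mem_singleton_iff] at hxg
        by_cases hgf : g m x = f x
        · by_cases hxB' : x ∈ Bx e al' a' c' σ
          · exact Or.inl (Or.inl ⟨hxB', by simp [hgf ▸ hxg, ← hgf, hxg]⟩)
          · exact Or.inl (Or.inr ⟨⟨hxB, hBmK hxB⟩, hxB'⟩)
        · exact Or.inr ⟨hBmK hxB, hgf⟩
      have := vol_tri Am A' Y1 Z hsub hA'fin hY1fin (hZfin m)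
      calc (volume Am).toReal ≤ r + (volume Y1).toReal + (volume Z).toReal := this
        _ ≤ r + D1 m + ep m := by rw [hZle]; linarith
        _ ≤ r + rho m := by
            have h0 : 0 ≤ D2 m := le_trans (ENNReal.toReal_nonneg) hY2le
            simp only [hrho]; linarith
    · have hsub : A' ⊆ Am ∪ Y2 ∪ Z := by
        rintro x ⟨hxB, hxg⟩
        simp only [Set.mem_preimage, Set.mem_singleton_iff] at hxg
        by_cases hgf : g m x = f x
        · by_cases hxBm : x ∈ Bm
          · exact Or.inl (Or.inl ⟨hxBm, by simp [hgf, hxg]⟩)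
          · exact Or.inl (Or.inr ⟨⟨hxB, hBx'K hxB⟩, hxBm⟩)
        · exact Or.inr ⟨hBx'K hxB, hgf⟩
      have := vol_tri A' Am Y2 Z hsub hAmfin hY2fin (hZfin m)
      have h2 : r ≤ (volume Am).toReal + D2 m + ep m := by rw [← hZle]; linarith
      have h0 : 0 ≤ D1 m := le_trans (ENNReal.toReal_nonneg) hY1le
      simp only [hrho]; linarith
  refine tendsto_of_tendsto_of_tendsto_of_le_of_le'
    (g := fun m => r - rho m) (h := fun m => r + rho m) ?_ ?_ ?_ ?_
  · simpa using (tendsto_const_nhds (x := r) (f := U)).sub hrholim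
  · simpa using (tendsto_const_nhds (x := r) (f := U)).add hrholim
  · filter_upwards [hev] with m hm using hm.2
  · filter_upwards [hev] with m hm using hm.1

lemma decomp_meas {d k q T : ℕ} (e : Fin T → Fin d) (al : ℝ) (a : Fin d → ℝ) (c : Fin T → ℝ)
    (L : (Fin T → Bool) → Fin q) {g : (Fin d → ℝ) → Fin k} (hg : Measurable g)
    {part : (Fin d → ℝ) → Fin q}
    (hpart : ∀ x, part x = L (fun s => decide (x (e s) ≤ c s)))
    (j : Fin k) (l : Fin q) :
    volume ({x : Fin d → ℝ | ∀ i, a i ≤ x i ∧ x i ≤ a i + al} ∩ g ⁻¹' {j} ∩ part ⁻¹' {l}) =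
      ∑ σ ∈ Finset.univ.filter (fun σ => L σ = l), volume (Bx e al a c σ ∩ g ⁻¹' {j}) := by
  classical
  have hset : {x : Fin d → ℝ | ∀ i, a i ≤ x i ∧ x i ≤ a i + al} ∩ g ⁻¹' {j} ∩ part ⁻¹' {l} =
      ⋃ σ ∈ Finset.univ.filter (fun σ => L σ = l), (Bx e al a c σ ∩ g ⁻¹' {j}) := by
    ext x
    simp only [Set.mem_inter_iff, Set.mem_setOf_eq, Set.mem_preimage, Set.mem_singleton_iff,
      Set.mem_iUnion, Finset.mem_filter, Finset.mem_univ, true_and, Bx]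
    constructor
    · rintro ⟨⟨hC, hgx⟩, hl⟩
      exact ⟨fun s => decide (x (e s) ≤ c s), by rw [← hpart x]; exact hl,
        ⟨⟨hC, fun s => rfl⟩, hgx⟩⟩
    · rintro ⟨σ, hσ, ⟨⟨hC, hdec⟩, hgx⟩⟩
      refine ⟨⟨hC, hgx⟩, ?_⟩
      rw [hpart x]
      have : (fun s => decide (x (e s) ≤ c s)) = σ := funext hdec
      rw [this]; exact hσ
  rw [hset]
  refine measure_biUnion_finset ?_ ?_
  · intro σ hσ σ' hσ' hne
    refine Set.disjoint_left.2 fun x hx hx' => ?_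
    have : x ∈ Bx e al a c σ ∩ Bx e al a c σ' := ⟨hx.1, hx'.1⟩
    rw [Bx_disjoint e al a c hne] at this
    exact this
  · intro σ hσ
    exact (Bx_measurable e al a c σ).inter (hg (measurableSet_singleton j))

lemma decomp_all {d k T : ℕ} (e : Fin T → Fin d) (al : ℝ) (a : Fin d → ℝ) (c : Fin T → ℝ)
    {g : (Fin d → ℝ) → Fin k} (hg : Measurable g) (j : Fin k) :
    volume ({x : Fin d → ℝ | ∀ i, a i ≤ x i ∧ x i ≤ a i + al} ∩ g ⁻¹' {j}) =
      ∑ σ : Fin T → Bool, volume (Bx e al a c σ ∩ g ⁻¹' {j}) := by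
  classical
  have hset : {x : Fin d → ℝ | ∀ i, a i ≤ x i ∧ x i ≤ a i + al} ∩ g ⁻¹' {j} =
      ⋃ σ ∈ (Finset.univ : Finset (Fin T → Bool)), (Bx e al a c σ ∩ g ⁻¹' {j}) := by
    ext x
    constructor
    · rintro ⟨hC, hgx⟩
      refine Set.mem_biUnion (Finset.mem_univ (fun s => decide (x (e s) ≤ c s))) ?_
      exact ⟨⟨hC, fun s => rfl⟩, hgx⟩
    · intro hx
      rcases Set.mem_iUnion₂.1 hx with ⟨σ, -, hσx⟩
      exact ⟨hσx.1.1, hσx.2⟩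
  rw [hset]
  rw [measure_biUnion_finset ?_ ?_]
  · intro σ hσ σ' hσ' hne
    refine Set.disjoint_left.2 fun x hx hx' => ?_
    have : x ∈ Bx e al a c σ ∩ Bx e al a c σ' := ⟨hx.1, hx'.1⟩
    rw [Bx_disjoint e al a c hne] at this
    exact this
  · intro σ hσ
    exact (Bx_measurable e al a c σ).inter (hg (measurableSet_singleton j))

lemma colDist_diff_tendsto {d k n : ℕ} (hn : 1 ≤ n)
    (fm : ℕ → (Fin d → ℝ) → Fin k) (f : (Fin d → ℝ) → Fin k)
    (hconv : Filter.Tendsto (fun m => colDist d k (fm m) f) Filter.atTop (nhds 0)) :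
    Tendsto (fun m => (volume (KK d n ∩ {x | fm m x ≠ f x})).toReal) atTop (nhds 0) := by
  have hterm_nonneg : ∀ (g : (Fin d → ℝ) → Fin k) (m : ℕ),
      0 ≤ (volume {x : Fin d → ℝ | (∀ i, |x i| ≤ (m : ℝ) + 1) ∧ g x ≠ f x}).toReal /
        ((2 * ((m : ℝ) + 1)) ^ d * 2 ^ (m + 1)) := by
    intro g m
    positivity
  have hbound : ∀ (g : (Fin d → ℝ) → Fin k) (m : ℕ),
      (volume {x : Fin d → ℝ | (∀ i, |x i| ≤ (m : ℝ) + 1) ∧ g x ≠ f x}).toReal /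
        ((2 * ((m : ℝ) + 1)) ^ d * 2 ^ (m + 1)) ≤ (1 / 2) ^ (m + 1) := by
    intro g m
    have hsub : {x : Fin d → ℝ | (∀ i, |x i| ≤ (m : ℝ) + 1) ∧ g x ≠ f x} ⊆ KK d (m + 1) := by
      intro x hx i
      have := hx.1 i
      push_cast
      linarith
    have hvol : (volume {x : Fin d → ℝ | (∀ i, |x i| ≤ (m : ℝ) + 1) ∧ g x ≠ f x}).toReal ≤
        (2 * ((m : ℝ) + 1)) ^ d := by
      refine ENNReal.toReal_le_of_le_ofReal (by positivity) ?_
      refine le_trans (measure_mono hsub) ?_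
      rw [KK_eq_pi, volume_pi_pi]
      simp only [Real.volume_Icc, Finset.prod_const, Finset.card_univ, Fintype.card_fin]
      rw [← ENNReal.ofReal_pow (by push_cast; linarith [Nat.cast_nonneg (α := ℝ) m])]
      apply le_of_eq
      congr 1
      push_cast
      ring
    calc (volume {x : Fin d → ℝ | (∀ i, |x i| ≤ (m : ℝ) + 1) ∧ g x ≠ f x}).toReal /
          ((2 * ((m : ℝ) + 1)) ^ d * 2 ^ (m + 1))
        ≤ (2 * ((m : ℝ) + 1)) ^ d / ((2 * ((m : ℝ) + 1)) ^ d * 2 ^ (m + 1)) := by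
          have h2 := hvol
          gcongr
      _ = (1 / 2 : ℝ) ^ (m + 1) := by
          rw [div_mul_eq_div_div, div_self (by positivity), one_div_pow]
  have hsummable : ∀ g : (Fin d → ℝ) → Fin k, Summable (fun m : ℕ =>
      (volume {x : Fin d → ℝ | (∀ i, |x i| ≤ (m : ℝ) + 1) ∧ g x ≠ f x}).toReal /
        ((2 * ((m : ℝ) + 1)) ^ d * 2 ^ (m + 1))) := by
    intro g
    refine Summable.of_nonneg_of_le (hterm_nonneg g) (hbound g) ?_
    have : Summable (fun m : ℕ => (1 / 2 : ℝ) ^ m) := summable_geometric_two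
    simpa [pow_succ] using this.mul_right (1/2 : ℝ)
  -- the set in question equals the (n-1)-st term's set
  have hcast : ((n - 1 : ℕ) : ℝ) + 1 = (n : ℝ) := by
    have : (1 : ℕ) ≤ n := hn
    push_cast [Nat.cast_sub this]
    ring
  have hsetK : ∀ g : (Fin d → ℝ) → Fin k,
      {x : Fin d → ℝ | (∀ i, |x i| ≤ ((n - 1 : ℕ) : ℝ) + 1) ∧ g x ≠ f x} =
        KK d n ∩ {x | g x ≠ f x} := by
    intro g
    ext x
    rw [hcast]
    simp [KK, Set.mem_inter_iff]
  have hle : ∀ m, (volume (KK d n ∩ {x | fm m x ≠ f x})).toReal ≤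
      ((2 * (n : ℝ)) ^ d * 2 ^ n) * colDist d k (fm m) f := by
    intro m
    have hterm := Summable.le_tsum (hsummable (fm m)) (n - 1) (fun j _ => hterm_nonneg (fm m) j)
    rw [hsetK (fm m), hcast] at hterm
    have hpos : (0 : ℝ) < (2 * (n : ℝ)) ^ d * 2 ^ n := by
      have : (0 : ℝ) < (n : ℝ) := by exact_mod_cast hn
      positivity
    have hn1 : n - 1 + 1 = n := Nat.succ_pred_eq_of_pos hn
    rw [hn1] at hterm
    have := mul_le_mul_of_nonneg_left hterm (le_of_lt hpos)
    rw [mul_div_cancel₀] at this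
    · exact le_trans this (le_of_eq rfl)
    · exact ne_of_gt hpos
  have hnonneg : ∀ m, (0 : ℝ) ≤ (volume (KK d n ∩ {x | fm m x ≠ f x})).toReal :=
    fun m => ENNReal.toReal_nonneg
  refine tendsto_of_tendsto_of_tendsto_of_le_of_le
    (tendsto_const_nhds) ?_ hnonneg hle
  have := hconv.const_mul ((2 * (n : ℝ)) ^ d * 2 ^ n)
  simpa using this

end Helpers

open Filter Set in
/-- The set of bad colorings is closed: if measurable colorings `fm` are all bad and
converge to a measurable coloring `f` in the metric of the space of colorings, then `f`
is bad. -/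
theorem stmt14 (d k q t n : ℕ) (hd : 1 ≤ d) (hk : 1 ≤ k) (hq : 2 ≤ q) (hn : 1 ≤ n)
    (fm : ℕ → (Fin d → ℝ) → Fin k) (hfm : ∀ m, Measurable (fm m))
    (hbad : ∀ m, IsBad d k q t n (fm m))
    (f : (Fin d → ℝ) → Fin k) (hf : Measurable f)
    (hconv : Filter.Tendsto (fun m => colDist d k (fm m) f) Filter.atTop (nhds 0)) :
    IsBad d k q t n f := by
  classical
  simp only [IsBad] at hbad ⊢
  choose al a hpos hbox t' ht' cut part h1 h2 h3 h4 h5 using hbad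
  have hn0 : (0 : ℝ) < n := by exact_mod_cast hn
  -- every splitting uses at least one cut
  have ht1 : ∀ m, 1 ≤ t' m := by
    intro m
    by_contra hcon
    push_neg at hcon
    have ht0 : t' m = 0 := by omega
    set C : Set (Fin d → ℝ) := {x | ∀ i, a m i ≤ x i ∧ x i ≤ a m i + al m} with hC
    have hconst : ∀ x y, part m x = part m y := by
      intro x y
      exact h4 m x y (fun s => absurd s.isLt (by omega))
    set l0 : Fin q := part m (fun _ => 0) with hl0
    set l1 : Fin q := if l0 = ⟨0, by omega⟩ then ⟨1, by omega⟩ else ⟨0, by omega⟩ with hl1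
    have hne : l1 ≠ l0 := by
      by_cases hc : l0 = ⟨0, by omega⟩
      · rw [hl1, if_pos hc, hc]
        intro hcon2
        have := congrArg Fin.val hcon2
        simp at this
      · rw [hl1, if_neg hc]
        exact fun hcon2 => hc hcon2.symm
    have hempty : part m ⁻¹' {l1} = ∅ := by
      ext x
      simp only [Set.mem_preimage, Set.mem_singleton_iff, Set.mem_empty_iff_false, iff_false]
      intro hx
      exact hne (hx.symm.trans (hconst x (fun _ => 0)))
    have hzero : ∀ j : Fin k, volume (C ∩ (fm m) ⁻¹' {j}) = 0 := by
      intro j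
      have := h5 m j l1
      rw [hempty, Set.inter_empty, measure_empty, mul_zero] at this
      exact this.symm
    have hCpos : 0 < volume C := by
      have hCeq : C = Set.pi Set.univ (fun i => Set.Icc (a m i) (a m i + al m)) := by
        ext x
        simp only [hC, Set.mem_setOf_eq, Set.mem_pi, Set.mem_univ, true_implies, Set.mem_Icc]
      rw [hCeq, volume_pi_pi]
      simp only [Real.volume_Icc, add_sub_cancel_left]
      rw [Finset.prod_const, Finset.card_univ, Fintype.card_fin]
      exact ENNReal.pow_pos (ENNReal.ofReal_pos.2 (hpos m)) d
    have hsubset : C ⊆ ⋃ j : Fin k, C ∩ (fm m) ⁻¹' {j} := by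
      intro x hx
      exact Set.mem_iUnion.2 ⟨fm m x, hx, rfl⟩
    have hCle : volume C ≤ ∑ j : Fin k, volume (C ∩ (fm m) ⁻¹' {j}) :=
      le_trans (measure_mono hsubset) (measure_iUnion_fintype_le _ _)
    rw [Finset.sum_eq_zero (fun j _ => hzero j)] at hCle
    exact absurd (le_antisymm hCle (by positivity)) (ne_of_gt hCpos)
  -- bounds on the cube
  have hal2 : ∀ m, 2 / (n : ℝ) ≤ al m := by
    intro m
    obtain ⟨hA, hB⟩ := h1 m ⟨0, ht1 m⟩
    have h12 : 1 / (n : ℝ) + 1 / n = 2 / n := by ring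
    linarith
  have hal_ub : ∀ m, al m ≤ 2 * (n : ℝ) := by
    intro m
    obtain ⟨hA, hB⟩ := hbox m ⟨0, hd⟩
    linarith
  have ha_mem : ∀ m i, a m i ∈ Set.Icc (-(n : ℝ)) n := by
    intro m i
    obtain ⟨hA, hB⟩ := hbox m i
    have := hal2 m
    have h2n : 0 < 2 / (n : ℝ) := by positivity
    constructor
    · exact hA
    · linarith
  -- ultrafilter setup
  set U : Ultrafilter ℕ := Ultrafilter.of Filter.atTop with hU
  have hUle : (U : Filter ℕ) ≤ Filter.atTop := Ultrafilter.of_le _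
  -- constant number of cuts
  obtain ⟨Tf, hTf⟩ := ultraConst U (fun m =>
    (⟨min (t' m) t, lt_of_le_of_lt (min_le_right _ _) (Nat.lt_succ_self t)⟩ : Fin (t + 1)))
  set T : ℕ := Tf.val with hT
  have hTt : T ≤ t := by omega
  have hevT : ∀ᶠ m in (U : Filter ℕ), t' m = T := by
    filter_upwards [hTf] with m hm
    have := congrArg Fin.val hm
    simpa [min_eq_left (ht' m)] using this
  -- padded cuts
  set cutT : ℕ → Fin T → Fin d × ℝ := fun m =>
    if h : t' m = T then fun s => cut m (Fin.cast h.symm s) else fun _ => (⟨0, hd⟩, 0)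
    with hcutT
  have hcc : ∀ m (hm : t' m = T) (s : Fin (t' m)), cutT m (Fin.cast hm s) = cut m s := by
    intro m hm s
    rw [hcutT]
    simp only [dif_pos hm]
    rfl
  have hcc2 : ∀ m (hm : t' m = T) (u : Fin T), cutT m u = cut m (Fin.cast hm.symm u) := by
    intro m hm u
    rw [hcutT]
    simp only [dif_pos hm]
  set cm : ℕ → Fin T → ℝ := fun m s => (cutT m s).2 with hcm
  -- labeling functions
  set LT : ℕ → (Fin T → Bool) → Fin q := fun m σ =>
    if h : ∃ x : Fin d → ℝ, (fun s => decide (x (cutT m s).1 ≤ (cutT m s).2)) = σ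
    then part m h.choose else ⟨0, by omega⟩ with hLT
  have hkeyL : ∀ m, t' m = T → ∀ x, part m x =
      LT m (fun s => decide (x (cutT m s).1 ≤ (cutT m s).2)) := by
    intro m hm x
    have hex : ∃ y : Fin d → ℝ, (fun s => decide (y (cutT m s).1 ≤ (cutT m s).2)) =
        (fun s => decide (x (cutT m s).1 ≤ (cutT m s).2)) := ⟨x, rfl⟩
    rw [hLT]
    simp only [dif_pos hex]
    refine h4 m x hex.choose fun s => ?_
    have hspec := hex.choose_spec
    have := congrFun hspec (Fin.cast hm s)
    rw [hcc m hm s] at this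
    exact (decide_eq_decide.1 this).symm
  -- constant axes and labeling
  obtain ⟨e, heve⟩ := ultraConst U (fun m => fun s : Fin T => (cutT m s).1)
  obtain ⟨L, hevL⟩ := ultraConst U LT
  have hgood : ∀ᶠ m in (U : Filter ℕ),
      t' m = T ∧ (fun s : Fin T => (cutT m s).1) = e ∧ LT m = L :=
    hevT.and (heve.and hevL)
  -- cut coordinates in range, eventually
  have hcm_mem : ∀ᶠ m in (U : Filter ℕ), ∀ s, cm m s ∈ Set.Icc (-(n : ℝ)) n := by
    filter_upwards [hevT] with m hm s
    have h1' := h1 m (Fin.cast hm.symm s)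
    rw [← hcc2 m hm s] at h1'
    obtain ⟨hA, hB⟩ := h1'
    obtain ⟨hA2, hB2⟩ := hbox m (cutT m s).1
    have h1n : 0 < 1 / (n : ℝ) := by positivity
    constructor <;> [linarith; linarith]
  -- compactness: extract limits
  set P : ℕ → ℝ × (Fin d → ℝ) × (Fin T → ℝ) := fun m => (al m, a m, cm m) with hP
  set S : Set (ℝ × (Fin d → ℝ) × (Fin T → ℝ)) :=
    Set.Icc (2 / (n : ℝ)) (2 * n) ×ˢ
      ((Set.univ.pi fun _ : Fin d => Set.Icc (-(n : ℝ)) n) ×ˢ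
        (Set.univ.pi fun _ : Fin T => Set.Icc (-(n : ℝ)) n)) with hS
  have hScomp : IsCompact S := (isCompact_Icc).prod
    ((isCompact_univ_pi fun _ => isCompact_Icc).prod (isCompact_univ_pi fun _ => isCompact_Icc))
  have hmemS : ∀ᶠ m in (U : Filter ℕ), P m ∈ S := by
    filter_upwards [hcm_mem] with m hm
    exact ⟨⟨hal2 m, hal_ub m⟩, fun i _ => ha_mem m i, fun s _ => hm s⟩
  obtain ⟨⟨al', a', c'⟩, hmemS', hle'⟩ := hScomp.ultrafilter_le_nhds (U.map P)
    (by rwa [Ultrafilter.coe_map, Filter.le_principal_iff, Filter.mem_map])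
  have hPlim : Filter.Tendsto P (U : Filter ℕ) (nhds (al', a', c')) := by
    rwa [Filter.Tendsto, ← Ultrafilter.coe_map]
  have hal' : Filter.Tendsto al (U : Filter ℕ) (nhds al') :=
    (continuous_fst.tendsto _).comp hPlim
  have ha' : ∀ i, Filter.Tendsto (fun m => a m i) (U : Filter ℕ) (nhds (a' i)) := by
    intro i
    have h2 : Filter.Tendsto (fun m => a m) (U : Filter ℕ) (nhds a') :=
      (continuous_fst.tendsto _).comp ((continuous_snd.tendsto _).comp hPlim)
    exact (tendsto_pi_nhds.1 h2) i
  have hc' : ∀ s, Filter.Tendsto (fun m => cm m s) (U : Filter ℕ) (nhds (c' s)) := by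
    intro s
    have h2 : Filter.Tendsto (fun m => cm m) (U : Filter ℕ) (nhds c') :=
      (continuous_snd.tendsto _).comp ((continuous_snd.tendsto _).comp hPlim)
    exact (tendsto_pi_nhds.1 h2) s
  have hal'pos : 0 < al' := lt_of_lt_of_le (by positivity) hmemS'.1.1
  -- limit box conditions
  have hbox' : ∀ i, -(n : ℝ) ≤ a' i ∧ a' i + al' ≤ n := by
    intro i
    constructor
    · exact ge_of_tendsto' (ha' i) (fun m => (hbox m i).1)
    · exact le_of_tendsto ((ha' i).add hal') (Filter.Eventually.of_forall fun m => (hbox m i).2)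
  -- limit cut conditions
  have hcutcond : ∀ᶠ m in (U : Filter ℕ), ∀ s : Fin T,
      a m (e s) + 1 / n ≤ cm m s ∧ cm m s + 1 / n ≤ a m (e s) + al m := by
    filter_upwards [hgood] with m hm s
    obtain ⟨hmT, hme, _⟩ := hm
    have h1' := h1 m (Fin.cast hmT.symm s)
    rw [← hcc2 m hmT s] at h1'
    have he : (cutT m s).1 = e s := congrFun hme s
    rw [he] at h1'
    exact h1'
  have hcut1' : ∀ s : Fin T, a' (e s) + 1 / n ≤ c' s := by
    intro s
    refine le_of_tendsto_of_tendsto ((ha' (e s)).add tendsto_const_nhds) (hc' s) ?_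
    filter_upwards [hcutcond] with m hm using (hm s).1
  have hcut2' : ∀ s : Fin T, c' s + 1 / n ≤ a' (e s) + al' := by
    intro s
    refine le_of_tendsto_of_tendsto ((hc' s).add tendsto_const_nhds) ((ha' (e s)).add hal') ?_
    filter_upwards [hcutcond] with m hm using (hm s).2
  have hsep' : ∀ s s' : Fin T, s ≠ s' → e s = e s' → 1 / (n : ℝ) ≤ |c' s - c' s'| := by
    intro s s' hne he
    refine ge_of_tendsto (((hc' s).sub (hc' s')).abs) ?_
    filter_upwards [hgood] with m hm
    obtain ⟨hmT, hme, -⟩ := hm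
    have hne2 : Fin.cast hmT.symm s ≠ Fin.cast hmT.symm s' := by
      intro hcon
      have hval := congrArg Fin.val hcon
      exact hne (Fin.ext hval)
    have haxes : (cut m (Fin.cast hmT.symm s)).1 = (cut m (Fin.cast hmT.symm s')).1 := by
      rw [← hcc2 m hmT s, ← hcc2 m hmT s', congrFun hme s, congrFun hme s', he]
    have hres := h2 m _ _ hne2 haxes
    rw [← hcc2 m hmT s, ← hcc2 m hmT s'] at hres
    exact hres
  -- limit part function
  set part' : (Fin d → ℝ) → Fin q := fun x => L (fun s => decide (x (e s) ≤ c' s)) with hpart'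
  have hpart'meas : Measurable part' := by
    refine measurable_to_countable' fun l => ?_
    have hpre : part' ⁻¹' {l} = ⋃ σ ∈ Finset.univ.filter (fun σ => L σ = l),
        ⋂ s, {x : Fin d → ℝ | decide (x (e s) ≤ c' s) = σ s} := by
      ext x
      simp only [Set.mem_preimage, Set.mem_singleton_iff, Set.mem_iUnion, Set.mem_iInter,
        Finset.mem_filter, Finset.mem_univ, true_and, Set.mem_setOf_eq, hpart']
      constructor
      · intro hx
        exact ⟨fun s => decide (x (e s) ≤ c' s), hx, fun s => rfl⟩
      · rintro ⟨σ, hσ, hx⟩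
        rw [show (fun s => decide (x (e s) ≤ c' s)) = σ from funext hx]
        exact hσ
    rw [hpre]
    exact MeasurableSet.biUnion (Set.to_countable _)
      (fun σ _ => MeasurableSet.iInter fun s => decide_set_measurable _ _ _)
  -- convergence of color-difference volumes
  have hdiffU : Filter.Tendsto
      (fun m => (volume (KK d n ∩ {x | fm m x ≠ f x})).toReal) (U : Filter ℕ) (nhds 0) :=
    (colDist_diff_tendsto hn fm f hconv).mono_left hUle
  -- final assembly
  refine ⟨al', a', hal'pos, hbox', T, hTt, fun s => (e s, c' s), part',
    fun s => ⟨hcut1' s, hcut2' s⟩, fun s s' hne he => hsep' s s' hne he, hpart'meas,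
    ?_, ?_⟩
  · intro x y hxy
    simp only [hpart']
    congr 1
    funext s
    exact decide_eq_decide.2 (hxy s)
  · intro j l
    -- key convergence for each box
    have hkey : ∀ σ : Fin T → Bool, Filter.Tendsto
        (fun m => (volume (Bx e (al m) (a m) (cm m) σ ∩ (fm m) ⁻¹' {j})).toReal)
        (U : Filter ℕ) (nhds ((volume (Bx e al' a' c' σ ∩ f ⁻¹' {j})).toReal)) :=
      fun σ => key_tendsto hd e (U : Filter ℕ) al a cm al' a' c'
        fm f j (Filter.Eventually.of_forall hbox) hbox' hal' ha' hc' hdiffU σ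
    set Sfil : ℝ := ∑ σ ∈ Finset.univ.filter (fun σ => L σ = l),
      (volume (Bx e al' a' c' σ ∩ f ⁻¹' {j})).toReal with hSfil
    set Sall : ℝ := ∑ σ : Fin T → Bool,
      (volume (Bx e al' a' c' σ ∩ f ⁻¹' {j})).toReal with hSall
    have hfin' : ∀ σ : Fin T → Bool, volume (Bx e al' a' c' σ ∩ f ⁻¹' {j}) ≠ ⊤ :=
      fun σ => vol_ne_top_of_subset_KK
        (Set.Subset.trans Set.inter_subset_left (Bx_subset_KK e c' σ hbox'))
    have hfinm : ∀ m σ, volume (Bx e (al m) (a m) (cm m) σ ∩ (fm m) ⁻¹' {j}) ≠ ⊤ :=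
      fun m σ => vol_ne_top_of_subset_KK
        (Set.Subset.trans Set.inter_subset_left (Bx_subset_KK e (cm m) σ (hbox m)))
    have hlim1 : Filter.Tendsto (fun m => (q : ℝ) * ∑ σ ∈ Finset.univ.filter (fun σ => L σ = l),
        (volume (Bx e (al m) (a m) (cm m) σ ∩ (fm m) ⁻¹' {j})).toReal)
        (U : Filter ℕ) (nhds ((q : ℝ) * Sfil)) :=
      (tendsto_finset_sum _ (fun σ _ => hkey σ)).const_mul _
    have hlim2 : Filter.Tendsto (fun m => ∑ σ : Fin T → Bool,
        (volume (Bx e (al m) (a m) (cm m) σ ∩ (fm m) ⁻¹' {j})).toReal)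
        (U : Filter ℕ) (nhds Sall) :=
      tendsto_finset_sum _ (fun σ _ => hkey σ)
    -- eventual equality of the two real sequences
    have heveq : ∀ᶠ m in (U : Filter ℕ),
        (q : ℝ) * ∑ σ ∈ Finset.univ.filter (fun σ => L σ = l),
          (volume (Bx e (al m) (a m) (cm m) σ ∩ (fm m) ⁻¹' {j})).toReal =
        ∑ σ : Fin T → Bool,
          (volume (Bx e (al m) (a m) (cm m) σ ∩ (fm m) ⁻¹' {j})).toReal := by
      filter_upwards [hgood] with m hm
      obtain ⟨hmT, hme, hmL⟩ := hm
      have hpartm : ∀ x, part m x = L (fun s => decide (x (e s) ≤ cm m s)) := by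
        intro x
        rw [hkeyL m hmT x, hmL]
        congr 1
        funext s
        rw [congrFun hme s]
      have hd1 := decomp_meas e (al m) (a m) (cm m) L (hfm m) hpartm j l
      have hd2 := decomp_all e (al m) (a m) (cm m) (hfm m) j
      have heq := h5 m j l
      rw [hd1, hd2] at heq
      have := congrArg ENNReal.toReal heq
      rw [ENNReal.toReal_mul, ENNReal.toReal_sum (fun σ _ => hfinm m σ),
        ENNReal.toReal_sum (fun σ _ => hfinm m σ)] at this
      simpa using this
    have hrealeq : (q : ℝ) * Sfil = Sall :=
      tendsto_nhds_unique (hlim1.congr' heveq) hlim2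
    -- transfer back to ENNReal
    have hd1 := decomp_meas e al' a' c' L hf (fun x => rfl) j l
    have hd2 := decomp_all e al' a' c' hf j
    rw [hd1, hd2]
    have hfs : ∑ σ ∈ Finset.univ.filter (fun σ => L σ = l),
        volume (Bx e al' a' c' σ ∩ f ⁻¹' {j}) ≠ ⊤ :=
      fun hcon => (ENNReal.sum_lt_top.2 (fun σ _ => (hfin' σ).lt_top)).ne hcon
    have has : ∑ σ : Fin T → Bool, volume (Bx e al' a' c' σ ∩ f ⁻¹' {j}) ≠ ⊤ :=
      fun hcon => (ENNReal.sum_lt_top.2 (fun σ _ => (hfin' σ).lt_top)).ne hcon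
    refine (ENNReal.toReal_eq_toReal_iff' (ENNReal.mul_ne_top (ENNReal.natCast_ne_top q) hfs) has).1 ?_
    rw [ENNReal.toReal_mul, ENNReal.toReal_sum (fun σ _ => hfin' σ),
      ENNReal.toReal_sum (fun σ _ => hfin' σ)]
    simpa using hrealeq
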